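/- arXiv:2012.02712 — 3 statements merged into one kernel-verified Lean document; each statement's English description precedes it below -/
import Mathlib

section
/- For all smooth sections e₁, e₂, e₃ : ℝ^{2d} → ℝ^{2d}, the flat C-bracket and pairing satisfy the invariance property of a DFT algebroid: ⟨[[e₃,e₁]] + D⟨e₃,e₁⟩, e₂⟩ + ⟨e₁, [[e₃,e₂]] + D⟨e₃,e₂⟩⟩ = e₃^A ∂_A ⟨e₁,e₂⟩. -/
open scoped BigOperators

noncomputable section

/-- The index involution implementing the O(d,d) metric η with matrix [[0,1],[1,0]]:
η_{AB} = 1 iff B = σd d A. -/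
def σd (d : ℕ) (A : Fin (2*d)) : Fin (2*d) :=
  if h : (A : ℕ) < d then ⟨(A : ℕ) + d, by omega⟩
  else ⟨(A : ℕ) - d, by have := A.isLt; omega⟩

/-- A section of the DFT algebroid bundle over ℝ^{2d}. -/
abbrev Sec (d : ℕ) := (Fin (2*d) → ℝ) → Fin (2*d) → ℝ

/-- Partial derivative ∂_A f at x. -/
def pd {n : ℕ} (f : (Fin n → ℝ) → ℝ) (A : Fin n) (x : Fin n → ℝ) : ℝ :=
  fderiv ℝ f x (Pi.single A 1)

/-- The pairing ⟨e₁,e₂⟩ = η_{AB} e₁^A e₂^B. -/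
def pair {d : ℕ} (e₁ e₂ : Sec d) (x : Fin (2*d) → ℝ) : ℝ :=
  ∑ A, e₁ x A * e₂ x (σd d A)

/-- The derivative D : C^∞ → Γ(L), (Df)^A = (1/2) η^{AB} ∂_B f. -/
def Dsec {d : ℕ} (f : (Fin (2*d) → ℝ) → ℝ) : Sec d :=
  fun x A => (1/2) * pd f (σd d A) x

/-- The flat C-bracket of double field theory. -/
def cbr {d : ℕ} (e₁ e₂ : Sec d) : Sec d := fun x B =>
  (∑ A, e₁ x A * pd (fun y => e₂ y B) A x
    - (1/2) * ∑ A, e₁ x A * pd (fun y => e₂ y (σd d A)) (σd d B) x)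
  - (∑ A, e₂ x A * pd (fun y => e₁ y B) A x
    - (1/2) * ∑ A, e₂ x A * pd (fun y => e₁ y (σd d A)) (σd d B) x)

/-- SC_ρ(e₁,e₂)f = (1/2) η^{BC} ∂_B f η_{AD} (e₁^A ∂_C e₂^D − e₂^A ∂_C e₁^D). -/
def SCrho {d : ℕ} (e₁ e₂ : Sec d) (f : (Fin (2*d) → ℝ) → ℝ) (x : Fin (2*d) → ℝ) : ℝ :=
  (1/2) * ∑ B, pd f B x *
    ∑ A, (e₁ x A * pd (fun y => e₂ y (σd d A)) (σd d B) x
          - e₂ x A * pd (fun y => e₁ y (σd d A)) (σd d B) x)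

/-- The Nijenhuis-type tensor N(e₁,e₂,e₃). -/
def Nform {d : ℕ} (e₁ e₂ e₃ : Sec d) (x : Fin (2*d) → ℝ) : ℝ :=
  (1/3) * (pair (cbr e₁ e₂) e₃ x + pair (cbr e₂ e₃) e₁ x + pair (cbr e₃ e₁) e₂ x)

/-- The Jacobiator of the C-bracket. -/
def Jac {d : ℕ} (e₁ e₂ e₃ : Sec d) : Sec d := fun x B =>
  cbr (cbr e₁ e₂) e₃ x B + cbr (cbr e₂ e₃) e₁ x B + cbr (cbr e₃ e₁) e₂ x B

/-- SC_Jac(e₁,e₂,e₃) = Jac(e₁,e₂,e₃) − D N(e₁,e₂,e₃). -/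
def SCJac {d : ℕ} (e₁ e₂ e₃ : Sec d) : Sec d := fun x B =>
  Jac e₁ e₂ e₃ x B - Dsec (Nform e₁ e₂ e₃) x B


lemma σd_σd (d : ℕ) (A : Fin (2*d)) : σd d (σd d A) = A := by
  have hA := A.isLt
  unfold σd
  by_cases h : (A : ℕ) < d
  · rw [dif_pos h, dif_neg (by simp only [Fin.val_mk]; omega)]
    ext; simp only [Fin.val_mk]; omega
  · rw [dif_neg h, dif_pos (by simp only [Fin.val_mk]; omega)]
    ext; simp only [Fin.val_mk]; omega

lemma pd_pair {d : ℕ} (f g : Sec d) (hf : ContDiff ℝ (⊤ : ℕ∞) f) (hg : ContDiff ℝ (⊤ : ℕ∞) g)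
    (C : Fin (2*d)) (x : Fin (2*d) → ℝ) :
    pd (pair f g) C x
      = ∑ A, (pd (fun y => f y A) C x * g x (σd d A)
              + f x A * pd (fun y => g y (σd d A)) C x) := by
  have hfA : ∀ A, DifferentiableAt ℝ (fun y => f y A) x :=
    fun A => (differentiable_pi.mp (hf.differentiable (by simp)) A) x
  have hgA : ∀ A, DifferentiableAt ℝ (fun y => g y A) x :=
    fun A => (differentiable_pi.mp (hg.differentiable (by simp)) A) x
  unfold pd pair
  rw [fderiv_fun_sum (u := Finset.univ)
      (A := fun A y => f y A * g y (σd d A))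
      (fun A _ => (hfA A).mul (hgA (σd d A)))]
  rw [ContinuousLinearMap.sum_apply]
  refine Finset.sum_congr rfl fun A _ => ?_
  rw [fderiv_fun_mul (hfA A) (hgA (σd d A))]
  simp [ContinuousLinearMap.add_apply, ContinuousLinearMap.smul_apply, smul_eq_mul]
  ring


lemma key {n : ℕ} (σ : Fin n → Fin n) (hσ : ∀ A, σ (σ A) = A)
    (a b c : Fin n → ℝ) (P Q R : Fin n → Fin n → ℝ) :
    (∑ B, (((∑ A, c A * P B A) - (1/2) * ∑ A, c A * P (σ A) (σ B)
         - ((∑ A, a A * R B A) - (1/2) * ∑ A, a A * R (σ A) (σ B)))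
         + (1/2) * ∑ A, (R A (σ B) * a (σ A) + c A * P (σ A) (σ B))) * b (σ B))
    + (∑ B, a B * (((∑ A, c A * Q (σ B) A) - (1/2) * ∑ A, c A * Q (σ A) B
         - ((∑ A, b A * R (σ B) A) - (1/2) * ∑ A, b A * R (σ A) B))
         + (1/2) * ∑ A, (R A B * b (σ A) + c A * Q (σ A) B)))
    = ∑ A, c A * ∑ B, (P B A * b (σ B) + a B * Q (σ B) A) := by
  have reidx : ∀ F : Fin n → ℝ, ∑ A, F (σ A) = ∑ A, F A :=
    fun F => Equiv.sum_comp (Function.Involutive.toPerm σ hσ) F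
  have h1 : ∀ B, ((∑ A, c A * P B A) - (1/2) * ∑ A, c A * P (σ A) (σ B)
         - ((∑ A, a A * R B A) - (1/2) * ∑ A, a A * R (σ A) (σ B)))
         + (1/2) * ∑ A, (R A (σ B) * a (σ A) + c A * P (σ A) (σ B))
       = ∑ A, (c A * P B A - a A * R B A + a A * R (σ A) (σ B)) := by
    intro B
    have e5 : ∑ A, (R A (σ B) * a (σ A) + c A * P (σ A) (σ B))
        = (∑ A, a A * R (σ A) (σ B)) + ∑ A, c A * P (σ A) (σ B) := by
      rw [Finset.sum_add_distrib]
      congr 1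
      rw [← reidx (fun A => R A (σ B) * a (σ A))]
      exact Finset.sum_congr rfl fun A _ => by rw [hσ]; ring
    rw [e5, show (∑ A, (c A * P B A - a A * R B A + a A * R (σ A) (σ B)))
        = ((∑ A, c A * P B A) - ∑ A, a A * R B A) + ∑ A, a A * R (σ A) (σ B) from by
      rw [Finset.sum_add_distrib, Finset.sum_sub_distrib]]
    ring
  have h2 : ∀ B, ((∑ A, c A * Q (σ B) A) - (1/2) * ∑ A, c A * Q (σ A) B
         - ((∑ A, b A * R (σ B) A) - (1/2) * ∑ A, b A * R (σ A) B))
         + (1/2) * ∑ A, (R A B * b (σ A) + c A * Q (σ A) B)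
       = ∑ A, (c A * Q (σ B) A - b A * R (σ B) A + b A * R (σ A) B) := by
    intro B
    have e5 : ∑ A, (R A B * b (σ A) + c A * Q (σ A) B)
        = (∑ A, b A * R (σ A) B) + ∑ A, c A * Q (σ A) B := by
      rw [Finset.sum_add_distrib]
      congr 1
      rw [← reidx (fun A => R A B * b (σ A))]
      exact Finset.sum_congr rfl fun A _ => by rw [hσ]; ring
    rw [e5, show (∑ A, (c A * Q (σ B) A - b A * R (σ B) A + b A * R (σ A) B))
        = ((∑ A, c A * Q (σ B) A) - ∑ A, b A * R (σ B) A) + ∑ A, b A * R (σ A) B from by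
      rw [Finset.sum_add_distrib, Finset.sum_sub_distrib]]
    ring
  have hv : (∑ B, ∑ A, (a B * (b A * R (σ A) B) - a B * (b A * R (σ B) A)))
      = ∑ B, ∑ A, ((a A * R B A - a A * R (σ A) (σ B)) * b (σ B)) := by
    have step1 : ∀ B, (∑ A, (a B * (b A * R (σ A) B) - a B * (b A * R (σ B) A)))
        = ∑ A, (a B * (b (σ A) * R A B) - a B * (b (σ A) * R (σ B) (σ A))) := by
      intro B
      rw [← reidx (fun A => a B * (b (σ A) * R A B) - a B * (b (σ A) * R (σ B) (σ A)))]
      exact Finset.sum_congr rfl fun A _ => by rw [hσ]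
    calc (∑ B, ∑ A, (a B * (b A * R (σ A) B) - a B * (b A * R (σ B) A)))
        = ∑ B, ∑ A, (a B * (b (σ A) * R A B) - a B * (b (σ A) * R (σ B) (σ A))) :=
          Finset.sum_congr rfl fun B _ => step1 B
      _ = ∑ A, ∑ B, (a B * (b (σ A) * R A B) - a B * (b (σ A) * R (σ B) (σ A))) :=
          Finset.sum_comm
      _ = ∑ B, ∑ A, ((a A * R B A - a A * R (σ A) (σ B)) * b (σ B)) :=
          Finset.sum_congr rfl fun B _ => Finset.sum_congr rfl fun A _ => by ring
  calc (∑ B, (((∑ A, c A * P B A) - (1/2) * ∑ A, c A * P (σ A) (σ B)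
         - ((∑ A, a A * R B A) - (1/2) * ∑ A, a A * R (σ A) (σ B)))
         + (1/2) * ∑ A, (R A (σ B) * a (σ A) + c A * P (σ A) (σ B))) * b (σ B))
    + (∑ B, a B * (((∑ A, c A * Q (σ B) A) - (1/2) * ∑ A, c A * Q (σ A) B
         - ((∑ A, b A * R (σ B) A) - (1/2) * ∑ A, b A * R (σ A) B))
         + (1/2) * ∑ A, (R A B * b (σ A) + c A * Q (σ A) B)))
      = ∑ B, ∑ A, ((c A * P B A - a A * R B A + a A * R (σ A) (σ B)) * b (σ B)
          + a B * (c A * Q (σ B) A - b A * R (σ B) A + b A * R (σ A) B)) := by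
        rw [← Finset.sum_add_distrib]
        refine Finset.sum_congr rfl fun B _ => ?_
        rw [h1 B, h2 B, Finset.sum_mul, Finset.mul_sum, ← Finset.sum_add_distrib]
    _ = ∑ B, ∑ A, ((c A * P B A * b (σ B) + c A * (a B * Q (σ B) A))
          + (- ((a A * R B A - a A * R (σ A) (σ B)) * b (σ B))
             + (a B * (b A * R (σ A) B) - a B * (b A * R (σ B) A)))) :=
          Finset.sum_congr rfl fun B _ => Finset.sum_congr rfl fun A _ => by ring
    _ = ∑ B, ∑ A, (c A * P B A * b (σ B) + c A * (a B * Q (σ B) A)) := by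
        have split : ∑ B, ∑ A, ((c A * P B A * b (σ B) + c A * (a B * Q (σ B) A))
          + (- ((a A * R B A - a A * R (σ A) (σ B)) * b (σ B))
             + (a B * (b A * R (σ A) B) - a B * (b A * R (σ B) A))))
          = (∑ B, ∑ A, (c A * P B A * b (σ B) + c A * (a B * Q (σ B) A)))
            + ((∑ B, ∑ A, (- ((a A * R B A - a A * R (σ A) (σ B)) * b (σ B))))
              + ∑ B, ∑ A, (a B * (b A * R (σ A) B) - a B * (b A * R (σ B) A))) := by
          simp only [← Finset.sum_add_distrib]
        rw [split, hv, show (∑ B, ∑ A, (- ((a A * R B A - a A * R (σ A) (σ B)) * b (σ B))))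
          = - ∑ B, ∑ A, ((a A * R B A - a A * R (σ A) (σ B)) * b (σ B)) from by
            simp [Finset.sum_neg_distrib]]
        ring
    _ = ∑ A, c A * ∑ B, (P B A * b (σ B) + a B * Q (σ B) A) := by
        rw [Finset.sum_comm]
        exact Finset.sum_congr rfl fun A _ => by
          rw [Finset.mul_sum]
          exact Finset.sum_congr rfl fun B _ => by ring

/-- Invariance of the pairing under the flat C-bracket. -/
theorem cbr_pair_invariance {d : ℕ} (hd : 1 ≤ d) (e₁ e₂ e₃ : Sec d)
    (he₁ : ContDiff ℝ (⊤ : ℕ∞) e₁) (he₂ : ContDiff ℝ (⊤ : ℕ∞) e₂) (he₃ : ContDiff ℝ (⊤ : ℕ∞) e₃) :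
    ∀ x : Fin (2*d) → ℝ,
      pair (fun y B => cbr e₃ e₁ y B + Dsec (pair e₃ e₁) y B) e₂ x
        + pair e₁ (fun y B => cbr e₃ e₂ y B + Dsec (pair e₃ e₂) y B) x
      = ∑ A, e₃ x A * pd (pair e₁ e₂) A x := by
  intro x
  simp only [pair, cbr, Dsec, pd_pair e₃ e₁ he₃ he₁, pd_pair e₃ e₂ he₃ he₂,
    pd_pair e₁ e₂ he₁ he₂, σd_σd]
  exact key (σd d) (σd_σd d) (fun A => e₁ x A) (fun A => e₂ x A) (fun A => e₃ x A)
    (fun B A => pd (fun y => e₁ y B) A x) (fun B A => pd (fun y => e₂ y B) A x)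
    (fun B A => pd (fun y => e₃ y B) A x)

end
end

section
/- On solutions of the strong constraint the C-bracket reduces to the Courant bracket: let X₁, X₂, ξ₁, ξ₂ : ℝ^d → ℝ^d be smooth and define sections e_i : ℝ^{2d} → ℝ^{2d} by e_i(x,x̃) := (X_i(x), ξ_i(x)). Then for all (x,x̃) ∈ ℝ^{2d}, the flat C-bracket satisfies [[e₁,e₂]](x,x̃) = ([X₁,X₂](x), (L_{X₁}ξ₂ − L_{X₂}ξ₁ − (1/2) d(ι_{X₁}ξ₂ − ι_{X₂}ξ₁))(x)), i.e. its first d components equal the vector part and its last d components equal the 1-form part of the Courant bracket [ê₁,ê₂]_C of the generalized sections ê_i = (X_i, ξ_i) on ℝ^d. -/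
open scoped BigOperators

noncomputable section

/-- Index of the a-th x-coordinate inside ℝ^{2d}. -/
def lo (d : ℕ) (a : Fin d) : Fin (2*d) := ⟨(a : ℕ), by have := a.isLt; omega⟩

/-- Index of the a-th x̃-coordinate inside ℝ^{2d}. -/
def hi (d : ℕ) (a : Fin d) : Fin (2*d) := ⟨(a : ℕ) + d, by have := a.isLt; omega⟩

/-- The x-part of a point of ℝ^{2d}. -/
def xpart {d : ℕ} (p : Fin (2*d) → ℝ) : Fin d → ℝ := fun a => p (lo d a)

/-- The section e(x,x̃) = (X(x), ξ(x)) of the DFT bundle built from data on ℝ^d. -/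
def liftSec {d : ℕ} (X ξ : (Fin d → ℝ) → Fin d → ℝ) : Sec d := fun p A =>
  if h : (A : ℕ) < d then X (xpart p) ⟨(A : ℕ), h⟩
  else ξ (xpart p) ⟨(A : ℕ) - d, by have := A.isLt; omega⟩

/-- A generalized section (X, ξ) on ℝ^d: a vector field and a 1-form. -/
abbrev GSec (d : ℕ) := ((Fin d → ℝ) → Fin d → ℝ) × ((Fin d → ℝ) → Fin d → ℝ)

/-- The Courant pairing ⟨e₁,e₂⟩_C = (1/2)(X₁^a ξ_{2a} + X₂^a ξ_{1a}). -/
def pairC {d : ℕ} (e₁ e₂ : GSec d) (x : Fin d → ℝ) : ℝ :=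
  (1/2) * (∑ a, e₁.1 x a * e₂.2 x a + ∑ a, e₂.1 x a * e₁.2 x a)

/-- D_C f = (0, df). -/
def DC {d : ℕ} (f : (Fin d → ℝ) → ℝ) : GSec d :=
  (fun _ _ => 0, fun x a => pd f a x)

/-- The Courant bracket on generalized sections of ℝ^d. -/
def courant {d : ℕ} (e₁ e₂ : GSec d) : GSec d :=
  (fun x b => ∑ a, e₁.1 x a * pd (fun y => e₂.1 y b) a x
            - ∑ a, e₂.1 x a * pd (fun y => e₁.1 y b) a x,
   fun x b => ∑ a, e₁.1 x a * pd (fun y => e₂.2 y b) a x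
            - ∑ a, e₂.1 x a * pd (fun y => e₁.2 y b) a x
            + ∑ a, e₂.2 x a * pd (fun y => e₁.1 y a) b x
            - ∑ a, e₁.2 x a * pd (fun y => e₂.1 y a) b x
            - (1/2) * pd (fun y => ∑ a, (e₁.1 y a * e₂.2 y a - e₂.1 y a * e₁.2 y a)) b x)

/-- The Courant Nijenhuis-type tensor N_c(e₁,e₂,e₃). -/
def Nc {d : ℕ} (e₁ e₂ e₃ : GSec d) (x : Fin d → ℝ) : ℝ :=
  (1/3) * (pairC (courant e₁ e₂) e₃ x + pairC (courant e₂ e₃) e₁ x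
            + pairC (courant e₃ e₁) e₂ x)

section Aux

variable {d : ℕ}

lemma sigma_lo (a : Fin d) : σd d (lo d a) = hi d a := by
  simp [σd, lo, hi, a.isLt]

lemma sigma_hi (a : Fin d) : σd d (hi d a) = lo d a := by
  have : ¬ ((a : ℕ) + d < d) := by omega
  simp [σd, lo, hi, this]

lemma liftSec_lo (X ξ : (Fin d → ℝ) → Fin d → ℝ) (p : Fin (2*d) → ℝ) (a : Fin d) :
    liftSec X ξ p (lo d a) = X (xpart p) a := by
  simp [liftSec, lo]

lemma liftSec_hi (X ξ : (Fin d → ℝ) → Fin d → ℝ) (p : Fin (2*d) → ℝ) (a : Fin d) :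
    liftSec X ξ p (hi d a) = ξ (xpart p) a := by
  have h : ¬ ((a : ℕ) + d < d) := by omega
  simp [liftSec, hi, h]

def splEquiv (d : ℕ) : (Fin d ⊕ Fin d) ≃ Fin (2*d) where
  toFun := Sum.elim (lo d) (hi d)
  invFun A := if h : (A : ℕ) < d then .inl ⟨A, h⟩ else .inr ⟨(A : ℕ) - d, by have := A.isLt; omega⟩
  left_inv s := by
    rcases s with a | a
    · simp [lo, a.isLt]
    · have h : ¬ ((a : ℕ) + d < d) := by omega
      simp [hi, h]
  right_inv A := by
    by_cases h : (A : ℕ) < d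
    · simp [h, lo]
    · simp [h, hi]
      ext
      simp
      omega

lemma sum_split (f : Fin (2*d) → ℝ) :
    ∑ A, f A = ∑ a : Fin d, f (lo d a) + ∑ a : Fin d, f (hi d a) := by
  rw [← Equiv.sum_comp (splEquiv d) f, Fintype.sum_sum_type]
  rfl

def xlin (d : ℕ) : ((Fin (2*d) → ℝ) →L[ℝ] (Fin d → ℝ)) :=
  ContinuousLinearMap.pi (fun a => ContinuousLinearMap.proj (lo d a))

lemma xlin_apply (p : Fin (2*d) → ℝ) : xlin d p = xpart p := rfl

lemma diffc {F : (Fin d → ℝ) → Fin d → ℝ} (hF : ContDiff ℝ (⊤ : ℕ∞) F) (c : Fin d) :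
    Differentiable ℝ (fun z => F z c) := by
  have : Differentiable ℝ F := hF.differentiable (by simp)
  exact fun y => ((ContinuousLinearMap.proj c : (Fin d → ℝ) →L[ℝ] ℝ).differentiableAt).comp y (this y)

lemma pd_comp (g : (Fin d → ℝ) → ℝ) (hg : Differentiable ℝ g) (A : Fin (2*d)) (p : Fin (2*d) → ℝ) :
    pd (fun y => g (xpart y)) A p = fderiv ℝ g (xpart p) (xpart (Pi.single A 1)) := by
  have hcomp : (fun y => g (xpart y)) = g ∘ (xlin d) := rfl
  rw [pd, hcomp, fderiv_comp (x := p) (hg _) (xlin d).differentiableAt]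
  simp [ContinuousLinearMap.fderiv, xlin_apply]

lemma xpart_single_lo (b : Fin d) :
    xpart (Pi.single (lo d b) (1:ℝ)) = Pi.single b 1 := by
  funext c
  simp only [xpart, Pi.single_apply]
  by_cases h : c = b
  · subst h; simp
  · have : lo d c ≠ lo d b := by
      simp [lo, Fin.ext_iff]; exact fun hh => h (Fin.ext hh)
    simp [h, this]

lemma xpart_single_hi (b : Fin d) :
    xpart (Pi.single (hi d b) (1:ℝ)) = 0 := by
  funext c
  have : lo d c ≠ hi d b := by
    simp [lo, hi, Fin.ext_iff]; omega
  simp [xpart, Pi.single_apply, this]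

lemma pd_comp_lo (F : (Fin d → ℝ) → Fin d → ℝ) (hF : ContDiff ℝ (⊤ : ℕ∞) F)
    (c b : Fin d) (p : Fin (2*d) → ℝ) :
    pd (fun y => F (xpart y) c) (lo d b) p = pd (fun z => F z c) b (xpart p) := by
  rw [pd_comp _ (diffc hF c), xpart_single_lo, pd]

lemma pd_comp_hi (F : (Fin d → ℝ) → Fin d → ℝ) (hF : ContDiff ℝ (⊤ : ℕ∞) F)
    (c b : Fin d) (p : Fin (2*d) → ℝ) :
    pd (fun y => F (xpart y) c) (hi d b) p = 0 := by
  rw [pd_comp _ (diffc hF c), xpart_single_hi]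
  simp

lemma pd_mul {n : ℕ} (f g : (Fin n → ℝ) → ℝ) {x : Fin n → ℝ}
    (hf : DifferentiableAt ℝ f x) (hg : DifferentiableAt ℝ g x) (A : Fin n) :
    pd (fun y => f y * g y) A x = f x * pd g A x + g x * pd f A x := by
  simp [pd, fderiv_fun_mul hf hg]

lemma pd_sub {n : ℕ} (f g : (Fin n → ℝ) → ℝ) {x : Fin n → ℝ}
    (hf : DifferentiableAt ℝ f x) (hg : DifferentiableAt ℝ g x) (A : Fin n) :
    pd (fun y => f y - g y) A x = pd f A x - pd g A x := by
  simp [pd, fderiv_fun_sub hf hg]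

lemma pd_sum {n m : ℕ} (F : Fin m → (Fin n → ℝ) → ℝ) {x : Fin n → ℝ}
    (hF : ∀ c, DifferentiableAt ℝ (F c) x) (A : Fin n) :
    pd (fun y => ∑ c, F c y) A x = ∑ c, pd (F c) A x := by
  rw [pd, fderiv_fun_sum (fun c _ => hF c)]
  simp [pd]

end Aux

/-- On solutions of the strong constraint the C-bracket reduces to the Courant bracket. -/
theorem cbr_reduces_to_courant {d : ℕ} (hd : 1 ≤ d)
    (X₁ X₂ ξ₁ ξ₂ : (Fin d → ℝ) → Fin d → ℝ)
    (hX₁ : ContDiff ℝ (⊤ : ℕ∞) X₁) (hX₂ : ContDiff ℝ (⊤ : ℕ∞) X₂)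
    (hξ₁ : ContDiff ℝ (⊤ : ℕ∞) ξ₁) (hξ₂ : ContDiff ℝ (⊤ : ℕ∞) ξ₂) :
    ∀ p : Fin (2*d) → ℝ,
      (∀ a : Fin d,
        cbr (liftSec X₁ ξ₁) (liftSec X₂ ξ₂) p (lo d a)
          = (courant (X₁, ξ₁) (X₂, ξ₂)).1 (xpart p) a) ∧
      (∀ a : Fin d,
        cbr (liftSec X₁ ξ₁) (liftSec X₂ ξ₂) p (hi d a)
          = (courant (X₁, ξ₁) (X₂, ξ₂)).2 (xpart p) a) := by
  intro p
  have hDa : ∀ (a : Fin d) (y : Fin d → ℝ),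
      pd (fun z => ∑ c, (X₁ z c * ξ₂ z c - X₂ z c * ξ₁ z c)) a y
        = ∑ c, (X₁ y c * pd (fun z => ξ₂ z c) a y + ξ₂ y c * pd (fun z => X₁ z c) a y
              - (X₂ y c * pd (fun z => ξ₁ z c) a y + ξ₁ y c * pd (fun z => X₂ z c) a y)) := by
    intro a y
    rw [pd_sum _ (fun c => (((diffc hX₁ c) y).fun_mul ((diffc hξ₂ c) y)).fun_sub
        (((diffc hX₂ c) y).fun_mul ((diffc hξ₁ c) y)))]
    refine Finset.sum_congr rfl (fun c _ => ?_)
    rw [pd_sub _ _ (((diffc hX₁ c) y).fun_mul ((diffc hξ₂ c) y))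
          (((diffc hX₂ c) y).fun_mul ((diffc hξ₁ c) y)),
        pd_mul _ _ ((diffc hX₁ c) y) ((diffc hξ₂ c) y),
        pd_mul _ _ ((diffc hX₂ c) y) ((diffc hξ₁ c) y)]
  constructor
  · intro a
    simp only [cbr, courant]
    rw [sum_split, sum_split, sum_split, sum_split]
    simp only [sigma_lo, sigma_hi, liftSec_lo, liftSec_hi,
      pd_comp_lo X₁ hX₁, pd_comp_lo X₂ hX₂, pd_comp_lo ξ₁ hξ₁, pd_comp_lo ξ₂ hξ₂,
      pd_comp_hi X₁ hX₁, pd_comp_hi X₂ hX₂, pd_comp_hi ξ₁ hξ₁, pd_comp_hi ξ₂ hξ₂,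
      mul_zero, Finset.sum_const_zero, add_zero, zero_add, sub_zero]
  · intro a
    simp only [cbr, courant]
    rw [sum_split, sum_split, sum_split, sum_split]
    simp only [sigma_lo, sigma_hi, liftSec_lo, liftSec_hi,
      pd_comp_lo X₁ hX₁, pd_comp_lo X₂ hX₂, pd_comp_lo ξ₁ hξ₁, pd_comp_lo ξ₂ hξ₂,
      pd_comp_hi X₁ hX₁, pd_comp_hi X₂ hX₂, pd_comp_hi ξ₁ hξ₁, pd_comp_hi ξ₂ hξ₂,
      mul_zero, Finset.sum_const_zero, add_zero, zero_add, sub_zero]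
    rw [hDa]
    simp only [Finset.sum_add_distrib, Finset.sum_sub_distrib, Finset.mul_sum]
    ring

end
end

section
/- On solutions of the strong constraint the Jacobiator of the C-bracket is exact: if e₁, e₂, e₃ : ℝ^{2d} → ℝ^{2d} are smooth sections that are tilde-independent (i.e. e_i(x,x̃) does not depend on x̃), then Jac(e₁,e₂,e₃) = D N(e₁,e₂,e₃). -/
open scoped BigOperators

noncomputable section

namespace DFTaux

variable {n : ℕ}

lemma pd_congr {f g : (Fin n → ℝ) → ℝ} (h : ∀ y, f y = g y) (A : Fin n) (x : Fin n → ℝ) :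
    pd f A x = pd g A x := by
  have : f = g := funext h
  rw [this]

lemma pd_add {f g : (Fin n → ℝ) → ℝ} {x : Fin n → ℝ} (hf : DifferentiableAt ℝ f x)
    (hg : DifferentiableAt ℝ g x) (A : Fin n) :
    pd (fun y => f y + g y) A x = pd f A x + pd g A x := by
  simp [pd, fderiv_fun_add hf hg]

lemma pd_sub {f g : (Fin n → ℝ) → ℝ} {x : Fin n → ℝ} (hf : DifferentiableAt ℝ f x)
    (hg : DifferentiableAt ℝ g x) (A : Fin n) :
    pd (fun y => f y - g y) A x = pd f A x - pd g A x := by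
  simp [pd, fderiv_fun_sub hf hg]

lemma pd_mul {f g : (Fin n → ℝ) → ℝ} {x : Fin n → ℝ} (hf : DifferentiableAt ℝ f x)
    (hg : DifferentiableAt ℝ g x) (A : Fin n) :
    pd (fun y => f y * g y) A x = f x * pd g A x + pd f A x * g x := by
  simp [pd, fderiv_fun_mul hf hg]; ring

lemma pd_const_mul {f : (Fin n → ℝ) → ℝ} {x : Fin n → ℝ} (hf : DifferentiableAt ℝ f x)
    (c : ℝ) (A : Fin n) :
    pd (fun y => c * f y) A x = c * pd f A x := by
  simp [pd, fderiv_const_mul hf c]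

lemma pd_sum {ι : Type*} {s : Finset ι} {F : ι → (Fin n → ℝ) → ℝ} {x : Fin n → ℝ}
    (h : ∀ i ∈ s, DifferentiableAt ℝ (F i) x) (A : Fin n) :
    pd (fun y => ∑ i ∈ s, F i y) A x = ∑ i ∈ s, pd (F i) A x := by
  simp [pd, fderiv_fun_sum h]

lemma contDiff_pd {f : (Fin n → ℝ) → ℝ} (hf : ContDiff ℝ (⊤ : ℕ∞) f) (A : Fin n) :
    ContDiff ℝ (⊤ : ℕ∞) (pd f A) := by
  have h1 : ContDiff ℝ (⊤ : ℕ∞) (fderiv ℝ f) := hf.fderiv_right (by simp)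
  exact h1.clm_apply contDiff_const

lemma diff_pd {f : (Fin n → ℝ) → ℝ} (hf : ContDiff ℝ (⊤ : ℕ∞) f) (A : Fin n) :
    Differentiable ℝ (pd f A) :=
  (contDiff_pd hf A).differentiable (by simp)

lemma pd_pd {f : (Fin n → ℝ) → ℝ} (hf : ContDiff ℝ (⊤ : ℕ∞) f) (A C : Fin n) (x : Fin n → ℝ) :
    pd (pd f A) C x = fderiv ℝ (fderiv ℝ f) x (Pi.single C 1) (Pi.single A 1) := by
  have hd : DifferentiableAt ℝ (fderiv ℝ f) x :=
    (hf.fderiv_right (m := (⊤ : ℕ∞)) (by simp)).differentiable (by simp) x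
  have h2 : pd f A = fun y => fderiv ℝ f y (Pi.single A 1) := rfl
  rw [pd, h2, fderiv_clm_apply hd (differentiableAt_const _)]
  simp

lemma pd_comm {f : (Fin n → ℝ) → ℝ} (hf : ContDiff ℝ (⊤ : ℕ∞) f) (A C : Fin n) (x : Fin n → ℝ) :
    pd (pd f A) C x = pd (pd f C) A x := by
  rw [pd_pd hf A C x, pd_pd hf C A x]
  have : IsSymmSndFDerivAt ℝ f x := hf.contDiffAt.isSymmSndFDerivAt
    (by rw [minSmoothness_of_isRCLikeNormedField]; exact WithTop.coe_le_coe.mpr le_top)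
  exact this _ _

end DFTaux
namespace DFTaux

variable {d : ℕ}

lemma sigma_val (A : Fin (2*d)) :
    ((σd d A : Fin (2*d)) : ℕ) = if (A : ℕ) < d then (A : ℕ) + d else (A : ℕ) - d := by
  unfold σd; split_ifs <;> rfl

lemma sigma_sigma (d : ℕ) (A : Fin (2*d)) : σd d (σd d A) = A := by
  have hA := A.isLt
  apply Fin.ext
  rw [sigma_val, sigma_val]
  split_ifs <;> omega

lemma sigma_hi {A : Fin (2*d)} (h : (A : ℕ) < d) : d ≤ ((σd d A : Fin (2*d)) : ℕ) := by
  rw [sigma_val, if_pos h]; omega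

/-- Kronecker delta. -/
def ind {m : ℕ} (X Y : Fin m) : ℝ := if X = Y then 1 else 0

lemma ind_symm {m : ℕ} (X Y : Fin m) : ind X Y = ind Y X := by
  unfold ind; split_ifs with h1 h2 <;> simp_all [eq_comm]

lemma ind_sigma (X Y : Fin (2*d)) : ind (σd d X) Y = ind X (σd d Y) := by
  have hiff : σd d X = Y ↔ X = σd d Y := by
    constructor
    · intro h; rw [← h]; exact (sigma_sigma d X).symm
    · intro h; rw [h]; exact sigma_sigma d Y
  unfold ind
  simp only [hiff]

lemma sum_ind_mul {m : ℕ} (A₀ : Fin m) (G : Fin m → ℝ) :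
    (∑ A, ind A A₀ * G A) = G A₀ := by
  simp [ind, ite_mul]

lemma sum_mul_ind {m : ℕ} (A₀ : Fin m) (G : Fin m → ℝ) :
    (∑ A, G A * ind A A₀) = G A₀ := by
  simp [ind, mul_ite]

/-- Tilde-independence of a scalar function. -/
def Ti (u : (Fin (2*d) → ℝ) → ℝ) : Prop :=
  ∀ p q : Fin (2*d) → ℝ, xpart p = xpart q → u p = u q

/-- Projection on the x-part, as a continuous linear map. -/
def Pl (d : ℕ) : (Fin (2*d) → ℝ) →L[ℝ] (Fin (2*d) → ℝ) :=
  ContinuousLinearMap.pi (fun A => if (A : ℕ) < d then ContinuousLinearMap.proj A else 0)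

lemma Pl_apply (p : Fin (2*d) → ℝ) (A : Fin (2*d)) :
    Pl d p A = if (A : ℕ) < d then p A else 0 := by
  simp only [Pl, ContinuousLinearMap.pi_apply]
  split_ifs <;> simp

lemma xpart_Pl (p : Fin (2*d) → ℝ) : xpart (Pl d p) = xpart p := by
  funext a
  have : ((lo d a : Fin (2*d)) : ℕ) < d := by simp [lo]
  simp [xpart, Pl_apply, this]

lemma fderiv_Ti {u : (Fin (2*d) → ℝ) → ℝ} (hu : Ti u) (hd : Differentiable ℝ u)
    (p : Fin (2*d) → ℝ) :
    fderiv ℝ u p = (fderiv ℝ u (Pl d p)).comp (Pl d : (Fin (2*d) → ℝ) →L[ℝ] (Fin (2*d) → ℝ)) := by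
  have h1 : u = fun q => u (Pl d q) := funext fun q => (hu _ _ (xpart_Pl q)).symm
  conv_lhs => rw [h1]
  rw [show (fun q => u (Pl d q)) = u ∘ (Pl d) from rfl]
  rw [fderiv_comp p (hd _) (Pl d).differentiableAt]
  rw [(Pl d).fderiv]

lemma pd_hi {u : (Fin (2*d) → ℝ) → ℝ} (hu : Ti u) (hd : Differentiable ℝ u)
    {A : Fin (2*d)} (hA : d ≤ (A : ℕ)) (x : Fin (2*d) → ℝ) : pd u A x = 0 := by
  rw [pd, fderiv_Ti hu hd]
  have h0 : Pl d (Pi.single A 1) = 0 := by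
    funext B
    rw [Pl_apply]
    split_ifs with hB
    · rw [Pi.single_apply]
      have : B ≠ A := by intro h; rw [h] at hB; omega
      simp [this]
    · rfl
  simp [h0]

lemma sc_mul {u v : (Fin (2*d) → ℝ) → ℝ} (hu : Ti u) (hv : Ti v)
    (hud : Differentiable ℝ u) (hvd : Differentiable ℝ v) (A : Fin (2*d)) (x y : Fin (2*d) → ℝ) :
    pd u (σd d A) x * pd v A y = 0 := by
  rcases lt_or_ge (A : ℕ) d with h | h
  · rw [pd_hi hu hud (sigma_hi h) x, zero_mul]
  · rw [pd_hi hv hvd h y, mul_zero]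

end DFTaux
namespace DFTaux

variable {d : ℕ}

/-- Basis-type section: coefficient `f` in slot `A₀`. -/
def bas (A₀ : Fin (2*d)) (f : (Fin (2*d) → ℝ) → ℝ) : Sec d := fun y A => f y * ind A A₀

lemma contDiff_bas {f : (Fin (2*d) → ℝ) → ℝ} (hf : ContDiff ℝ (⊤ : ℕ∞) f) (A₀ A : Fin (2*d)) :
    ContDiff ℝ (⊤ : ℕ∞) (fun y => bas A₀ f y A) := hf.mul contDiff_const

lemma pd_mul_const {u : (Fin (2*d) → ℝ) → ℝ} (hu : Differentiable ℝ u) (c : ℝ)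
    (A : Fin (2*d)) (z : Fin (2*d) → ℝ) :
    pd (fun y => u y * c) A z = pd u A z * c := by
  simp [pd, fderiv_mul_const (hu z) c]; ring

lemma cbr_apply (e₁ e₂ : Sec d) (x : Fin (2*d) → ℝ) (B : Fin (2*d)) :
    cbr e₁ e₂ x B =
      (∑ A, e₁ x A * pd (fun y => e₂ y B) A x
        - (1/2) * ∑ A, e₁ x A * pd (fun y => e₂ y (σd d A)) (σd d B) x)
      - (∑ A, e₂ x A * pd (fun y => e₁ y B) A x
        - (1/2) * ∑ A, e₂ x A * pd (fun y => e₁ y (σd d A)) (σd d B) x) := rfl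

lemma cbr_bas {f g : (Fin (2*d) → ℝ) → ℝ} (hf : ContDiff ℝ (⊤ : ℕ∞) f) (hg : ContDiff ℝ (⊤ : ℕ∞) g)
    (A₁ A₂ : Fin (2*d)) (y : Fin (2*d) → ℝ) (C : Fin (2*d)) :
    cbr (bas A₁ f) (bas A₂ g) y C =
      ind C A₂ * (f y * pd g A₁ y) - ind C A₁ * (g y * pd f A₂ y)
        + ind A₁ (σd d A₂) *
            ((1/2) * (g y * pd f (σd d C) y - f y * pd g (σd d C) y)) := by
  have hdf := hf.differentiable (by simp)
  have hdg := hg.differentiable (by simp)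
  rw [cbr_apply]
  unfold bas
  simp only [pd_mul_const hdf, pd_mul_const hdg]
  have s1 : ∑ A, f y * ind A A₁ * (pd g A y * ind C A₂)
      = f y * pd g A₁ y * ind C A₂ := by
    rw [show (∑ A, f y * ind A A₁ * (pd g A y * ind C A₂))
        = ∑ A, ind A A₁ * (f y * pd g A y * ind C A₂) from
      Finset.sum_congr rfl fun A _ => by ring, sum_ind_mul]
  have s2 : ∑ A, f y * ind A A₁ * (pd g (σd d C) y * ind (σd d A) A₂)
      = f y * pd g (σd d C) y * ind A₁ (σd d A₂) := by
    rw [show (∑ A, f y * ind A A₁ * (pd g (σd d C) y * ind (σd d A) A₂))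
        = ∑ A, ind A A₁ * (f y * pd g (σd d C) y * ind A (σd d A₂)) from
      Finset.sum_congr rfl fun A _ => by rw [ind_sigma]; ring, sum_ind_mul]
  have s3 : ∑ A, g y * ind A A₂ * (pd f A y * ind C A₁)
      = g y * pd f A₂ y * ind C A₁ := by
    rw [show (∑ A, g y * ind A A₂ * (pd f A y * ind C A₁))
        = ∑ A, ind A A₂ * (g y * pd f A y * ind C A₁) from
      Finset.sum_congr rfl fun A _ => by ring, sum_ind_mul]
  have s4 : ∑ A, g y * ind A A₂ * (pd f (σd d C) y * ind (σd d A) A₁)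
      = g y * pd f (σd d C) y * ind A₁ (σd d A₂) := by
    rw [show (∑ A, g y * ind A A₂ * (pd f (σd d C) y * ind (σd d A) A₁))
        = ∑ A, ind A A₂ * (g y * pd f (σd d C) y * ind A (σd d A₁)) from
      Finset.sum_congr rfl fun A _ => by rw [ind_sigma]; ring, sum_ind_mul,
      show ind A₂ (σd d A₁) = ind A₁ (σd d A₂) from by rw [← ind_sigma, ind_symm]]
  rw [s1, s2, s3, s4]
  ring

lemma contDiff_cbr_bas {f g : (Fin (2*d) → ℝ) → ℝ} (hf : ContDiff ℝ (⊤ : ℕ∞) f)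
    (hg : ContDiff ℝ (⊤ : ℕ∞) g) (A₁ A₂ : Fin (2*d)) (C : Fin (2*d)) :
    ContDiff ℝ (⊤ : ℕ∞) (fun y => cbr (bas A₁ f) (bas A₂ g) y C) := by
  have : (fun y => cbr (bas A₁ f) (bas A₂ g) y C)
      = fun y => ind C A₂ * (f y * pd g A₁ y) - ind C A₁ * (g y * pd f A₂ y)
        + ind A₁ (σd d A₂) *
            ((1/2) * (g y * pd f (σd d C) y - f y * pd g (σd d C) y)) :=
    funext fun y => cbr_bas hf hg A₁ A₂ y C
  rw [this]
  exact ((contDiff_const.mul (hf.mul (contDiff_pd hg A₁))).sub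
    (contDiff_const.mul (hg.mul (contDiff_pd hf A₂)))).add
    (contDiff_const.mul (contDiff_const.mul ((hg.mul (contDiff_pd hf (σd d C))).sub
      (hf.mul (contDiff_pd hg (σd d C))))))

end DFTaux
namespace DFTaux

variable {d : ℕ}

lemma pd_cbr_bas {f g : (Fin (2*d) → ℝ) → ℝ} (hf : ContDiff ℝ (⊤ : ℕ∞) f) (hg : ContDiff ℝ (⊤ : ℕ∞) g)
    (A₁ A₂ C X : Fin (2*d)) (x : Fin (2*d) → ℝ) :
    pd (fun y => cbr (bas A₁ f) (bas A₂ g) y C) X x =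
      ind C A₂ * (f x * pd (pd g A₁) X x + pd f X x * pd g A₁ x)
      - ind C A₁ * (g x * pd (pd f A₂) X x + pd g X x * pd f A₂ x)
      + ind A₁ (σd d A₂) * ((1/2) *
          ((g x * pd (pd f (σd d C)) X x + pd g X x * pd f (σd d C) x)
            - (f x * pd (pd g (σd d C)) X x + pd f X x * pd g (σd d C) x))) := by
  have Df := hf.differentiable (by simp)
  have Dg := hg.differentiable (by simp)
  rw [pd_congr (fun y => cbr_bas hf hg A₁ A₂ y C) X x]
  have d1 : DifferentiableAt ℝ (fun y => f y * pd g A₁ y) x := (Df x).mul (diff_pd hg A₁ x)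
  have d2 : DifferentiableAt ℝ (fun y => g y * pd f A₂ y) x := (Dg x).mul (diff_pd hf A₂ x)
  have d3 : DifferentiableAt ℝ (fun y => g y * pd f (σd d C) y - f y * pd g (σd d C) y) x :=
    ((Dg x).mul (diff_pd hf (σd d C) x)).sub ((Df x).mul (diff_pd hg (σd d C) x))
  have e1 : DifferentiableAt ℝ (fun y => ind C A₂ * (f y * pd g A₁ y)) x := d1.const_mul _
  have e2 : DifferentiableAt ℝ (fun y => ind C A₁ * (g y * pd f A₂ y)) x := d2.const_mul _
  have e3 : DifferentiableAt ℝ (fun y => ind A₁ (σd d A₂) *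
      ((1/2) * (g y * pd f (σd d C) y - f y * pd g (σd d C) y))) x :=
    (d3.const_mul _).const_mul _
  rw [pd_add (e1.fun_sub e2) e3, pd_sub e1 e2, pd_const_mul d1, pd_const_mul d2,
    pd_const_mul (d3.const_mul _), pd_const_mul d3,
    pd_sub ((Dg x).fun_mul (diff_pd hf (σd d C) x)) ((Df x).fun_mul (diff_pd hg (σd d C) x)),
    pd_mul (Df x) (diff_pd hg A₁ x), pd_mul (Dg x) (diff_pd hf A₂ x),
    pd_mul (Dg x) (diff_pd hf (σd d C) x), pd_mul (Df x) (diff_pd hg (σd d C) x)]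

end DFTaux
namespace DFTaux

variable {d : ℕ}

/-- Collapse a sum against a basis section. -/
lemma sum_bas_mul (h : (Fin (2*d) → ℝ) → ℝ) (A₃ : Fin (2*d)) (x : Fin (2*d) → ℝ)
    (G : Fin (2*d) → ℝ) :
    ∑ A, bas A₃ h x A * G A = h x * G A₃ := by
  unfold bas
  rw [show (∑ A, h x * ind A A₃ * G A) = ∑ A, ind A A₃ * (h x * G A) from
    Finset.sum_congr rfl fun A _ => by ring, sum_ind_mul]

lemma L1 {f g h : (Fin (2*d) → ℝ) → ℝ} (hf : ContDiff ℝ (⊤ : ℕ∞) f) (hg : ContDiff ℝ (⊤ : ℕ∞) g)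
    (hh : ContDiff ℝ (⊤ : ℕ∞) h) (tf : Ti f) (tg : Ti g) (th : Ti h)
    (A₁ A₂ A₃ B : Fin (2*d)) (x : Fin (2*d) → ℝ) :
    ∑ A, cbr (bas A₁ f) (bas A₂ g) x A * pd (fun y => bas A₃ h y B) A x
      = ind B A₃ * (f x * pd g A₁ x * pd h A₂ x)
        - ind B A₃ * (g x * pd f A₂ x * pd h A₁ x) := by
  have Df := hf.differentiable (by simp)
  have Dg := hg.differentiable (by simp)
  have Dh := hh.differentiable (by simp)
  rw [show (∑ A, cbr (bas A₁ f) (bas A₂ g) x A * pd (fun y => bas A₃ h y B) A x)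
      = ∑ A, (ind A A₂ * (f x * pd g A₁ x * pd h A x * ind B A₃)
          - ind A A₁ * (g x * pd f A₂ x * pd h A x * ind B A₃)
          + ind A₁ (σd d A₂) * ((1/2) * (g x * (pd f (σd d A) x * pd h A x)
              - f x * (pd g (σd d A) x * pd h A x)) * ind B A₃)) from
    Finset.sum_congr rfl fun A _ => by
      rw [cbr_bas hf hg A₁ A₂ x A,
        show (fun y => bas A₃ h y B) = fun y => h y * ind B A₃ from rfl,
        pd_mul_const Dh]
      ring]
  rw [Finset.sum_add_distrib, Finset.sum_sub_distrib, sum_ind_mul, sum_ind_mul,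
    Finset.sum_eq_zero (fun A _ => by
      rw [sc_mul tf th Df Dh A x x, sc_mul tg th Dg Dh A x x]
      ring)]
  ring

lemma L2 (K : Sec d) {h : (Fin (2*d) → ℝ) → ℝ} (hh : ContDiff ℝ (⊤ : ℕ∞) h)
    (A₃ B : Fin (2*d)) (x : Fin (2*d) → ℝ) :
    ∑ A, K x A * pd (fun y => bas A₃ h y (σd d A)) (σd d B) x
      = K x (σd d A₃) * pd h (σd d B) x := by
  have Dh := hh.differentiable (by simp)
  rw [show (∑ A, K x A * pd (fun y => bas A₃ h y (σd d A)) (σd d B) x)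
      = ∑ A, (K x A * pd h (σd d B) x) * ind A (σd d A₃) from
    Finset.sum_congr rfl fun A _ => by
      rw [show (fun y => bas A₃ h y (σd d A)) = fun y => h y * ind (σd d A) A₃ from rfl,
        pd_mul_const Dh, ind_sigma]
      ring, sum_mul_ind]

/-- Full expansion of a double bracket of basis sections (natural form). -/
lemma cbr_cbr_bas {f g h : (Fin (2*d) → ℝ) → ℝ} (hf : ContDiff ℝ (⊤ : ℕ∞) f) (hg : ContDiff ℝ (⊤ : ℕ∞) g)
    (hh : ContDiff ℝ (⊤ : ℕ∞) h) (tf : Ti f) (tg : Ti g) (th : Ti h)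
    (A₁ A₂ A₃ B : Fin (2*d)) (x : Fin (2*d) → ℝ) :
    cbr (cbr (bas A₁ f) (bas A₂ g)) (bas A₃ h) x B
      = (ind B A₃ * (f x * pd g A₁ x * pd h A₂ x)
          - ind B A₃ * (g x * pd f A₂ x * pd h A₁ x))
        - (1/2) * ((ind (σd d A₃) A₂ * (f x * pd g A₁ x)
            - ind (σd d A₃) A₁ * (g x * pd f A₂ x)
            + ind A₁ (σd d A₂) * ((1/2) * (g x * pd f A₃ x - f x * pd g A₃ x)))
              * pd h (σd d B) x)
        - (h x * (ind B A₂ * (f x * pd (pd g A₁) A₃ x + pd f A₃ x * pd g A₁ x)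
            - ind B A₁ * (g x * pd (pd f A₂) A₃ x + pd g A₃ x * pd f A₂ x)
            + ind A₁ (σd d A₂) * ((1/2) *
                ((g x * pd (pd f (σd d B)) A₃ x + pd g A₃ x * pd f (σd d B) x)
                  - (f x * pd (pd g (σd d B)) A₃ x + pd f A₃ x * pd g (σd d B) x))))
          - (1/2) * (h x * (ind (σd d A₃) A₂ *
                (f x * pd (pd g A₁) (σd d B) x + pd f (σd d B) x * pd g A₁ x)
              - ind (σd d A₃) A₁ *
                (g x * pd (pd f A₂) (σd d B) x + pd g (σd d B) x * pd f A₂ x)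
              + ind A₁ (σd d A₂) * ((1/2) *
                  ((g x * pd (pd f A₃) (σd d B) x + pd g (σd d B) x * pd f A₃ x)
                    - (f x * pd (pd g A₃) (σd d B) x + pd f (σd d B) x * pd g A₃ x)))))) := by
  rw [cbr_apply, L1 hf hg hh tf tg th A₁ A₂ A₃ B x, L2 _ hh A₃ B x,
    sum_bas_mul h A₃ x (fun A => pd (fun y => cbr (bas A₁ f) (bas A₂ g) y B) A x),
    sum_bas_mul h A₃ x
      (fun A => pd (fun y => cbr (bas A₁ f) (bas A₂ g) y (σd d A)) (σd d B) x),
    cbr_bas hf hg A₁ A₂ x (σd d A₃), pd_cbr_bas hf hg A₁ A₂ B A₃ x,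
    pd_cbr_bas hf hg A₁ A₂ (σd d A₃) (σd d B) x]
  simp only [sigma_sigma]

end DFTaux
namespace DFTaux

variable {d : ℕ}

lemma pair_with_bas (K : Sec d) (h : (Fin (2*d) → ℝ) → ℝ) (A₃ : Fin (2*d))
    (y : Fin (2*d) → ℝ) :
    pair K (bas A₃ h) y = K y (σd d A₃) * h y := by
  unfold pair bas
  rw [show (∑ A, K y A * (h y * ind (σd d A) A₃)) = ∑ A, (K y A * h y) * ind A (σd d A₃) from
    Finset.sum_congr rfl fun A _ => by rw [ind_sigma]; ring, sum_mul_ind]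

lemma DsecN_bas {f g h : (Fin (2*d) → ℝ) → ℝ} (hf : ContDiff ℝ (⊤ : ℕ∞) f) (hg : ContDiff ℝ (⊤ : ℕ∞) g)
    (hh : ContDiff ℝ (⊤ : ℕ∞) h) (A₁ A₂ A₃ B : Fin (2*d)) (x : Fin (2*d) → ℝ) :
    Dsec (Nform (bas A₁ f) (bas A₂ g) (bas A₃ h)) x B
      = (1/2) * ((1/3) *
        ((ind (σd d A₃) A₂ * (f x * pd g A₁ x) - ind (σd d A₃) A₁ * (g x * pd f A₂ x)
            + ind A₁ (σd d A₂) * ((1/2) * (g x * pd f A₃ x - f x * pd g A₃ x)))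
              * pd h (σd d B) x
          + (ind (σd d A₃) A₂ * (f x * pd (pd g A₁) (σd d B) x + pd f (σd d B) x * pd g A₁ x)
            - ind (σd d A₃) A₁ * (g x * pd (pd f A₂) (σd d B) x + pd g (σd d B) x * pd f A₂ x)
            + ind A₁ (σd d A₂) * ((1/2) *
                ((g x * pd (pd f A₃) (σd d B) x + pd g (σd d B) x * pd f A₃ x)
                  - (f x * pd (pd g A₃) (σd d B) x + pd f (σd d B) x * pd g A₃ x)))) * h x
          + ((ind (σd d A₁) A₃ * (g x * pd h A₂ x) - ind (σd d A₁) A₂ * (h x * pd g A₃ x)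
            + ind A₂ (σd d A₃) * ((1/2) * (h x * pd g A₁ x - g x * pd h A₁ x)))
              * pd f (σd d B) x
          + (ind (σd d A₁) A₃ * (g x * pd (pd h A₂) (σd d B) x + pd g (σd d B) x * pd h A₂ x)
            - ind (σd d A₁) A₂ * (h x * pd (pd g A₃) (σd d B) x + pd h (σd d B) x * pd g A₃ x)
            + ind A₂ (σd d A₃) * ((1/2) *
                ((h x * pd (pd g A₁) (σd d B) x + pd h (σd d B) x * pd g A₁ x)
                  - (g x * pd (pd h A₁) (σd d B) x + pd g (σd d B) x * pd h A₁ x)))) * f x)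
          + ((ind (σd d A₂) A₁ * (h x * pd f A₃ x) - ind (σd d A₂) A₃ * (f x * pd h A₁ x)
            + ind A₃ (σd d A₁) * ((1/2) * (f x * pd h A₂ x - h x * pd f A₂ x)))
              * pd g (σd d B) x
          + (ind (σd d A₂) A₁ * (h x * pd (pd f A₃) (σd d B) x + pd h (σd d B) x * pd f A₃ x)
            - ind (σd d A₂) A₃ * (f x * pd (pd h A₁) (σd d B) x + pd f (σd d B) x * pd h A₁ x)
            + ind A₃ (σd d A₁) * ((1/2) *
                ((f x * pd (pd h A₂) (σd d B) x + pd f (σd d B) x * pd h A₂ x)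
                  - (h x * pd (pd f A₂) (σd d B) x + pd h (σd d B) x * pd f A₂ x)))) * g x))) := by
  have Df := hf.differentiable (by simp)
  have Dg := hg.differentiable (by simp)
  have Dh := hh.differentiable (by simp)
  have hN : ∀ y, Nform (bas A₁ f) (bas A₂ g) (bas A₃ h) y
      = (1/3) * (cbr (bas A₁ f) (bas A₂ g) y (σd d A₃) * h y
          + cbr (bas A₂ g) (bas A₃ h) y (σd d A₁) * f y
          + cbr (bas A₃ h) (bas A₁ f) y (σd d A₂) * g y) := by
    intro y
    show (1/3) * (pair (cbr (bas A₁ f) (bas A₂ g)) (bas A₃ h) y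
        + pair (cbr (bas A₂ g) (bas A₃ h)) (bas A₁ f) y
        + pair (cbr (bas A₃ h) (bas A₁ f)) (bas A₂ g) y) = _
    rw [pair_with_bas, pair_with_bas, pair_with_bas]
  have dK1 : DifferentiableAt ℝ (fun y => cbr (bas A₁ f) (bas A₂ g) y (σd d A₃)) x :=
    (contDiff_cbr_bas hf hg A₁ A₂ (σd d A₃)).differentiable (by simp) x
  have dK2 : DifferentiableAt ℝ (fun y => cbr (bas A₂ g) (bas A₃ h) y (σd d A₁)) x :=
    (contDiff_cbr_bas hg hh A₂ A₃ (σd d A₁)).differentiable (by simp) x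
  have dK3 : DifferentiableAt ℝ (fun y => cbr (bas A₃ h) (bas A₁ f) y (σd d A₂)) x :=
    (contDiff_cbr_bas hh hf A₃ A₁ (σd d A₂)).differentiable (by simp) x
  have d1 : DifferentiableAt ℝ (fun y => cbr (bas A₁ f) (bas A₂ g) y (σd d A₃) * h y) x :=
    dK1.mul (Dh x)
  have d2 : DifferentiableAt ℝ (fun y => cbr (bas A₂ g) (bas A₃ h) y (σd d A₁) * f y) x :=
    dK2.mul (Df x)
  have d3 : DifferentiableAt ℝ (fun y => cbr (bas A₃ h) (bas A₁ f) y (σd d A₂) * g y) x :=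
    dK3.mul (Dg x)
  rw [show Dsec (Nform (bas A₁ f) (bas A₂ g) (bas A₃ h)) x B
      = (1/2) * pd (Nform (bas A₁ f) (bas A₂ g) (bas A₃ h)) (σd d B) x from rfl,
    pd_congr hN, pd_const_mul ((d1.fun_add d2).fun_add d3), pd_add (d1.fun_add d2) d3, pd_add d1 d2,
    pd_mul dK1 (Dh x), pd_mul dK2 (Df x), pd_mul dK3 (Dg x),
    cbr_bas hf hg A₁ A₂ x (σd d A₃), cbr_bas hg hh A₂ A₃ x (σd d A₁),
    cbr_bas hh hf A₃ A₁ x (σd d A₂),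
    pd_cbr_bas hf hg A₁ A₂ (σd d A₃) (σd d B) x,
    pd_cbr_bas hg hh A₂ A₃ (σd d A₁) (σd d B) x,
    pd_cbr_bas hh hf A₃ A₁ (σd d A₂) (σd d B) x]
  simp only [sigma_sigma]

end DFTaux
namespace DFTaux

variable {d : ℕ}

lemma core {f g h : (Fin (2*d) → ℝ) → ℝ} (hf : ContDiff ℝ (⊤ : ℕ∞) f) (hg : ContDiff ℝ (⊤ : ℕ∞) g)
    (hh : ContDiff ℝ (⊤ : ℕ∞) h) (tf : Ti f) (tg : Ti g) (th : Ti h)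
    (A₁ A₂ A₃ B : Fin (2*d)) (x : Fin (2*d) → ℝ) :
    Jac (bas A₁ f) (bas A₂ g) (bas A₃ h) x B
      = Dsec (Nform (bas A₁ f) (bas A₂ g) (bas A₃ h)) x B := by
  rw [show Jac (bas A₁ f) (bas A₂ g) (bas A₃ h) x B
      = cbr (cbr (bas A₁ f) (bas A₂ g)) (bas A₃ h) x B
        + cbr (cbr (bas A₂ g) (bas A₃ h)) (bas A₁ f) x B
        + cbr (cbr (bas A₃ h) (bas A₁ f)) (bas A₂ g) x B from rfl,
    cbr_cbr_bas hf hg hh tf tg th A₁ A₂ A₃ B x,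
    cbr_cbr_bas hg hh hf tg th tf A₂ A₃ A₁ B x,
    cbr_cbr_bas hh hf hg th tf tg A₃ A₁ A₂ B x,
    DsecN_bas hf hg hh A₁ A₂ A₃ B x]
  rw [show ind (σd d A₃) A₂ = ind A₂ (σd d A₃) from ind_symm _ _,
    show ind (σd d A₃) A₁ = ind A₁ (σd d A₃) from ind_symm _ _,
    show ind (σd d A₁) A₃ = ind A₁ (σd d A₃) from ind_sigma _ _,
    show ind (σd d A₁) A₂ = ind A₁ (σd d A₂) from ind_sigma _ _,
    show ind (σd d A₂) A₁ = ind A₁ (σd d A₂) from ind_symm _ _,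
    show ind (σd d A₂) A₃ = ind A₂ (σd d A₃) from ind_sigma _ _,
    show ind A₃ (σd d A₁) = ind A₁ (σd d A₃) from by rw [ind_symm, ind_sigma]]
  rw [pd_comm hf (σd d B) A₃ x, pd_comm hg (σd d B) A₃ x,
    pd_comm hh A₂ A₁ x, pd_comm hg A₃ A₁ x, pd_comm hg (σd d B) A₁ x,
    pd_comm hh (σd d B) A₁ x, pd_comm hf A₃ A₂ x, pd_comm hh (σd d B) A₂ x,
    pd_comm hf (σd d B) A₂ x]
  ring

end DFTaux
namespace DFTaux

variable {d : ℕ}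

lemma cbr_sum_left {ι : Type*} {s : Finset ι} {u : ι → Sec d} {w v : Sec d}
    {x : Fin (2*d) → ℝ} {B : Fin (2*d)}
    (he : ∀ y A, w y A = ∑ k ∈ s, u k y A)
    (hu : ∀ k ∈ s, ∀ C, DifferentiableAt ℝ (fun y => u k y C) x) :
    cbr w v x B = ∑ k ∈ s, cbr (u k) v x B := by
  rw [cbr_apply]
  have t1 : ∑ A, w x A * pd (fun y => v y B) A x
      = ∑ k ∈ s, ∑ A, u k x A * pd (fun y => v y B) A x := by
    rw [show (∑ A, w x A * pd (fun y => v y B) A x)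
        = ∑ A, ∑ k ∈ s, u k x A * pd (fun y => v y B) A x from
      Finset.sum_congr rfl fun A _ => by rw [he x A, Finset.sum_mul], Finset.sum_comm]
  have t2 : ∑ A, w x A * pd (fun y => v y (σd d A)) (σd d B) x
      = ∑ k ∈ s, ∑ A, u k x A * pd (fun y => v y (σd d A)) (σd d B) x := by
    rw [show (∑ A, w x A * pd (fun y => v y (σd d A)) (σd d B) x)
        = ∑ A, ∑ k ∈ s, u k x A * pd (fun y => v y (σd d A)) (σd d B) x from
      Finset.sum_congr rfl fun A _ => by rw [he x A, Finset.sum_mul], Finset.sum_comm]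
  have t3 : ∑ A, v x A * pd (fun y => w y B) A x
      = ∑ k ∈ s, ∑ A, v x A * pd (fun y => u k y B) A x := by
    rw [show (∑ A, v x A * pd (fun y => w y B) A x)
        = ∑ A, ∑ k ∈ s, v x A * pd (fun y => u k y B) A x from
      Finset.sum_congr rfl fun A _ => by
        rw [pd_congr (fun y => he y B) A x, pd_sum (fun k hk => hu k hk B), Finset.mul_sum],
      Finset.sum_comm]
  have t4 : ∑ A, v x A * pd (fun y => w y (σd d A)) (σd d B) x
      = ∑ k ∈ s, ∑ A, v x A * pd (fun y => u k y (σd d A)) (σd d B) x := by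
    rw [show (∑ A, v x A * pd (fun y => w y (σd d A)) (σd d B) x)
        = ∑ A, ∑ k ∈ s, v x A * pd (fun y => u k y (σd d A)) (σd d B) x from
      Finset.sum_congr rfl fun A _ => by
        rw [pd_congr (fun y => he y (σd d A)) (σd d B) x,
          pd_sum (fun k hk => hu k hk (σd d A)), Finset.mul_sum],
      Finset.sum_comm]
  rw [t1, t2, t3, t4, Finset.mul_sum, Finset.mul_sum, ← Finset.sum_sub_distrib,
    ← Finset.sum_sub_distrib, ← Finset.sum_sub_distrib]
  exact Finset.sum_congr rfl fun k _ => (cbr_apply _ _ _ _).symm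

lemma cbr_sum_right {ι : Type*} {s : Finset ι} {v : ι → Sec d} {w u : Sec d}
    {x : Fin (2*d) → ℝ} {B : Fin (2*d)}
    (he : ∀ y A, w y A = ∑ k ∈ s, v k y A)
    (hv : ∀ k ∈ s, ∀ C, DifferentiableAt ℝ (fun y => v k y C) x) :
    cbr u w x B = ∑ k ∈ s, cbr u (v k) x B := by
  rw [cbr_apply]
  have t1 : ∑ A, u x A * pd (fun y => w y B) A x
      = ∑ k ∈ s, ∑ A, u x A * pd (fun y => v k y B) A x := by
    rw [show (∑ A, u x A * pd (fun y => w y B) A x)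
        = ∑ A, ∑ k ∈ s, u x A * pd (fun y => v k y B) A x from
      Finset.sum_congr rfl fun A _ => by
        rw [pd_congr (fun y => he y B) A x, pd_sum (fun k hk => hv k hk B), Finset.mul_sum],
      Finset.sum_comm]
  have t2 : ∑ A, u x A * pd (fun y => w y (σd d A)) (σd d B) x
      = ∑ k ∈ s, ∑ A, u x A * pd (fun y => v k y (σd d A)) (σd d B) x := by
    rw [show (∑ A, u x A * pd (fun y => w y (σd d A)) (σd d B) x)
        = ∑ A, ∑ k ∈ s, u x A * pd (fun y => v k y (σd d A)) (σd d B) x from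
      Finset.sum_congr rfl fun A _ => by
        rw [pd_congr (fun y => he y (σd d A)) (σd d B) x,
          pd_sum (fun k hk => hv k hk (σd d A)), Finset.mul_sum],
      Finset.sum_comm]
  have t3 : ∑ A, w x A * pd (fun y => u y B) A x
      = ∑ k ∈ s, ∑ A, v k x A * pd (fun y => u y B) A x := by
    rw [show (∑ A, w x A * pd (fun y => u y B) A x)
        = ∑ A, ∑ k ∈ s, v k x A * pd (fun y => u y B) A x from
      Finset.sum_congr rfl fun A _ => by rw [he x A, Finset.sum_mul], Finset.sum_comm]
  have t4 : ∑ A, w x A * pd (fun y => u y (σd d A)) (σd d B) x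
      = ∑ k ∈ s, ∑ A, v k x A * pd (fun y => u y (σd d A)) (σd d B) x := by
    rw [show (∑ A, w x A * pd (fun y => u y (σd d A)) (σd d B) x)
        = ∑ A, ∑ k ∈ s, v k x A * pd (fun y => u y (σd d A)) (σd d B) x from
      Finset.sum_congr rfl fun A _ => by rw [he x A, Finset.sum_mul], Finset.sum_comm]
  rw [t1, t2, t3, t4, Finset.mul_sum, Finset.mul_sum, ← Finset.sum_sub_distrib,
    ← Finset.sum_sub_distrib, ← Finset.sum_sub_distrib]
  exact Finset.sum_congr rfl fun k _ => (cbr_apply _ _ _ _).symm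

lemma pair_sum_left {ι : Type*} {s : Finset ι} {u : ι → Sec d} {w v : Sec d}
    {y : Fin (2*d) → ℝ} (he : ∀ z A, w z A = ∑ k ∈ s, u k z A) :
    pair w v y = ∑ k ∈ s, pair (u k) v y := by
  unfold pair
  rw [show (∑ A, w y A * v y (σd d A)) = ∑ A, ∑ k ∈ s, u k y A * v y (σd d A) from
    Finset.sum_congr rfl fun A _ => by rw [he y A, Finset.sum_mul], Finset.sum_comm]

lemma pair_sum_right {ι : Type*} {s : Finset ι} {v : ι → Sec d} {w u : Sec d}
    {y : Fin (2*d) → ℝ} (he : ∀ z A, w z A = ∑ k ∈ s, v k z A) :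
    pair u w y = ∑ k ∈ s, pair u (v k) y := by
  unfold pair
  rw [show (∑ A, u y A * w y (σd d A)) = ∑ A, ∑ k ∈ s, u y A * v k y (σd d A) from
    Finset.sum_congr rfl fun A _ => by rw [he y (σd d A), Finset.mul_sum], Finset.sum_comm]

lemma sum_mul_ind' {m : ℕ} (X : Fin m) (G : Fin m → ℝ) :
    ∑ A₀, G A₀ * ind X A₀ = G X := by
  rw [show (∑ A₀, G A₀ * ind X A₀) = ∑ A₀, G A₀ * ind A₀ X from
    Finset.sum_congr rfl fun A₀ _ => by rw [ind_symm], sum_mul_ind]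

lemma contDiff_Nform_bas {f g h : (Fin (2*d) → ℝ) → ℝ} (hf : ContDiff ℝ (⊤ : ℕ∞) f)
    (hg : ContDiff ℝ (⊤ : ℕ∞) g) (hh : ContDiff ℝ (⊤ : ℕ∞) h) (A₁ A₂ A₃ : Fin (2*d)) :
    ContDiff ℝ (⊤ : ℕ∞) (fun y => Nform (bas A₁ f) (bas A₂ g) (bas A₃ h) y) := by
  have hN : (fun y => Nform (bas A₁ f) (bas A₂ g) (bas A₃ h) y)
      = fun y => (1/3) * (cbr (bas A₁ f) (bas A₂ g) y (σd d A₃) * h y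
          + cbr (bas A₂ g) (bas A₃ h) y (σd d A₁) * f y
          + cbr (bas A₃ h) (bas A₁ f) y (σd d A₂) * g y) := by
    funext y
    show (1/3) * (pair (cbr (bas A₁ f) (bas A₂ g)) (bas A₃ h) y
        + pair (cbr (bas A₂ g) (bas A₃ h)) (bas A₁ f) y
        + pair (cbr (bas A₃ h) (bas A₁ f)) (bas A₂ g) y) = _
    rw [pair_with_bas, pair_with_bas, pair_with_bas]
  rw [hN]
  exact contDiff_const.mul
    ((((contDiff_cbr_bas hf hg A₁ A₂ (σd d A₃)).mul hh).add
      ((contDiff_cbr_bas hg hh A₂ A₃ (σd d A₁)).mul hf)).add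
      ((contDiff_cbr_bas hh hf A₃ A₁ (σd d A₂)).mul hg))

end DFTaux
namespace DFTaux

lemma sum_rot {α β γ M : Type*} [Fintype α] [Fintype β] [Fintype γ] [AddCommMonoid M]
    (F : α → β → γ → M) :
    ∑ a, ∑ b, ∑ c, F a b c = ∑ c, ∑ a, ∑ b, F a b c := by
  rw [show (∑ a, ∑ b, ∑ c, F a b c) = ∑ a, ∑ c, ∑ b, F a b c from
    Finset.sum_congr rfl fun a _ => Finset.sum_comm]
  exact Finset.sum_comm

lemma sum_rot2 {α β γ M : Type*} [Fintype α] [Fintype β] [Fintype γ] [AddCommMonoid M]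
    (F : α → β → γ → M) :
    ∑ a, ∑ b, ∑ c, F a b c = ∑ b, ∑ c, ∑ a, F a b c :=
  (sum_rot F).trans (sum_rot (fun c a b => F a b c))

end DFTaux

open DFTaux in
theorem jacobiator_exact_of_tilde_independent' {d : ℕ} (hd : 1 ≤ d) (e₁ e₂ e₃ : Sec d)
    (he₁ : ContDiff ℝ (⊤ : ℕ∞) e₁) (he₂ : ContDiff ℝ (⊤ : ℕ∞) e₂) (he₃ : ContDiff ℝ (⊤ : ℕ∞) e₃)
    (ht₁ : ∀ p q : Fin (2*d) → ℝ, xpart p = xpart q → e₁ p = e₁ q)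
    (ht₂ : ∀ p q : Fin (2*d) → ℝ, xpart p = xpart q → e₂ p = e₂ q)
    (ht₃ : ∀ p q : Fin (2*d) → ℝ, xpart p = xpart q → e₃ p = e₃ q) :
    ∀ (x : Fin (2*d) → ℝ) (B : Fin (2*d)),
      Jac e₁ e₂ e₃ x B = Dsec (Nform e₁ e₂ e₃) x B := by
  intro x B
  have hc₁ : ∀ A₀, ContDiff ℝ (⊤ : ℕ∞) (fun y => e₁ y A₀) := fun A₀ => contDiff_pi.mp he₁ A₀
  have hc₂ : ∀ A₀, ContDiff ℝ (⊤ : ℕ∞) (fun y => e₂ y A₀) := fun A₀ => contDiff_pi.mp he₂ A₀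
  have hc₃ : ∀ A₀, ContDiff ℝ (⊤ : ℕ∞) (fun y => e₃ y A₀) := fun A₀ => contDiff_pi.mp he₃ A₀
  have tc₁ : ∀ A₀, Ti (fun y => e₁ y A₀) := fun A₀ p q hpq => congrFun (ht₁ p q hpq) A₀
  have tc₂ : ∀ A₀, Ti (fun y => e₂ y A₀) := fun A₀ p q hpq => congrFun (ht₂ p q hpq) A₀
  have tc₃ : ∀ A₀, Ti (fun y => e₃ y A₀) := fun A₀ p q hpq => congrFun (ht₃ p q hpq) A₀
  have hb₁ : ∀ (y : Fin (2*d) → ℝ) (A : Fin (2*d)),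
      e₁ y A = ∑ A₀, bas A₀ (fun z => e₁ z A₀) y A := fun y A => by
    unfold bas; rw [sum_mul_ind']
  have hb₂ : ∀ (y : Fin (2*d) → ℝ) (A : Fin (2*d)),
      e₂ y A = ∑ A₀, bas A₀ (fun z => e₂ z A₀) y A := fun y A => by
    unfold bas; rw [sum_mul_ind']
  have hb₃ : ∀ (y : Fin (2*d) → ℝ) (A : Fin (2*d)),
      e₃ y A = ∑ A₀, bas A₀ (fun z => e₃ z A₀) y A := fun y A => by
    unfold bas; rw [sum_mul_ind']
  have dbas₁ : ∀ (A₀ C : Fin (2*d)) (z : Fin (2*d) → ℝ),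
      DifferentiableAt ℝ (fun y => bas A₀ (fun w => e₁ w A₀) y C) z :=
    fun A₀ C z => (contDiff_bas (hc₁ A₀) A₀ C).differentiable (by simp) z
  have dbas₂ : ∀ (A₀ C : Fin (2*d)) (z : Fin (2*d) → ℝ),
      DifferentiableAt ℝ (fun y => bas A₀ (fun w => e₂ w A₀) y C) z :=
    fun A₀ C z => (contDiff_bas (hc₂ A₀) A₀ C).differentiable (by simp) z
  have dbas₃ : ∀ (A₀ C : Fin (2*d)) (z : Fin (2*d) → ℝ),
      DifferentiableAt ℝ (fun y => bas A₀ (fun w => e₃ w A₀) y C) z :=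
    fun A₀ C z => (contDiff_bas (hc₃ A₀) A₀ C).differentiable (by simp) z
  -- inner bracket decompositions (as pointwise identities)
  have hK12 : ∀ (y : Fin (2*d) → ℝ) (C : Fin (2*d)), cbr e₁ e₂ y C
      = ∑ A₁, ∑ A₂, cbr (bas A₁ (fun z => e₁ z A₁)) (bas A₂ (fun z => e₂ z A₂)) y C := by
    intro y C
    rw [cbr_sum_left hb₁ (fun k _ C' => dbas₁ k C' y)]
    exact Finset.sum_congr rfl fun A₁ _ => cbr_sum_right hb₂ (fun k _ C' => dbas₂ k C' y)
  have hK23 : ∀ (y : Fin (2*d) → ℝ) (C : Fin (2*d)), cbr e₂ e₃ y C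
      = ∑ A₂, ∑ A₃, cbr (bas A₂ (fun z => e₂ z A₂)) (bas A₃ (fun z => e₃ z A₃)) y C := by
    intro y C
    rw [cbr_sum_left hb₂ (fun k _ C' => dbas₂ k C' y)]
    exact Finset.sum_congr rfl fun A₂ _ => cbr_sum_right hb₃ (fun k _ C' => dbas₃ k C' y)
  have hK31 : ∀ (y : Fin (2*d) → ℝ) (C : Fin (2*d)), cbr e₃ e₁ y C
      = ∑ A₃, ∑ A₁, cbr (bas A₃ (fun z => e₃ z A₃)) (bas A₁ (fun z => e₁ z A₁)) y C := by
    intro y C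
    rw [cbr_sum_left hb₃ (fun k _ C' => dbas₃ k C' y)]
    exact Finset.sum_congr rfl fun A₃ _ => cbr_sum_right hb₁ (fun k _ C' => dbas₁ k C' y)
  -- outer bracket decompositions
  have hT1 : cbr (cbr e₁ e₂) e₃ x B = ∑ A₁, ∑ A₂, ∑ A₃,
      cbr (cbr (bas A₁ (fun z => e₁ z A₁)) (bas A₂ (fun z => e₂ z A₂)))
        (bas A₃ (fun z => e₃ z A₃)) x B := by
    rw [cbr_sum_left (u := fun A₁ => fun y C =>
        ∑ A₂, cbr (bas A₁ (fun z => e₁ z A₁)) (bas A₂ (fun z => e₂ z A₂)) y C) hK12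
      (fun A₁ _ C => DifferentiableAt.fun_sum fun A₂ _ =>
        (contDiff_cbr_bas (hc₁ A₁) (hc₂ A₂) A₁ A₂ C).differentiable (by simp) x)]
    refine Finset.sum_congr rfl fun A₁ _ => ?_
    rw [cbr_sum_left (u := fun A₂ =>
        cbr (bas A₁ (fun z => e₁ z A₁)) (bas A₂ (fun z => e₂ z A₂))) (fun y A => rfl)
      (fun A₂ _ C => (contDiff_cbr_bas (hc₁ A₁) (hc₂ A₂) A₁ A₂ C).differentiable (by simp) x)]
    exact Finset.sum_congr rfl fun A₂ _ => cbr_sum_right hb₃ (fun k _ C => dbas₃ k C x)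
  have hT2 : cbr (cbr e₂ e₃) e₁ x B = ∑ A₁, ∑ A₂, ∑ A₃,
      cbr (cbr (bas A₂ (fun z => e₂ z A₂)) (bas A₃ (fun z => e₃ z A₃)))
        (bas A₁ (fun z => e₁ z A₁)) x B := by
    rw [cbr_sum_left (u := fun A₂ => fun y C =>
        ∑ A₃, cbr (bas A₂ (fun z => e₂ z A₂)) (bas A₃ (fun z => e₃ z A₃)) y C) hK23
      (fun A₂ _ C => DifferentiableAt.fun_sum fun A₃ _ =>
        (contDiff_cbr_bas (hc₂ A₂) (hc₃ A₃) A₂ A₃ C).differentiable (by simp) x)]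
    rw [show (∑ A₂, cbr (fun y C =>
        ∑ A₃, cbr (bas A₂ (fun z => e₂ z A₂)) (bas A₃ (fun z => e₃ z A₃)) y C) e₁ x B)
        = ∑ A₂, ∑ A₃, ∑ A₁, cbr (cbr (bas A₂ (fun z => e₂ z A₂))
            (bas A₃ (fun z => e₃ z A₃))) (bas A₁ (fun z => e₁ z A₁)) x B from
      Finset.sum_congr rfl fun A₂ _ => by
        rw [cbr_sum_left (u := fun A₃ =>
            cbr (bas A₂ (fun z => e₂ z A₂)) (bas A₃ (fun z => e₃ z A₃))) (fun y A => rfl)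
          (fun A₃ _ C => (contDiff_cbr_bas (hc₂ A₂) (hc₃ A₃) A₂ A₃ C).differentiable (by simp) x)]
        exact Finset.sum_congr rfl fun A₃ _ => cbr_sum_right hb₁ (fun k _ C => dbas₁ k C x)]
    exact sum_rot _
  have hT3 : cbr (cbr e₃ e₁) e₂ x B = ∑ A₁, ∑ A₂, ∑ A₃,
      cbr (cbr (bas A₃ (fun z => e₃ z A₃)) (bas A₁ (fun z => e₁ z A₁)))
        (bas A₂ (fun z => e₂ z A₂)) x B := by
    rw [cbr_sum_left (u := fun A₃ => fun y C =>
        ∑ A₁, cbr (bas A₃ (fun z => e₃ z A₃)) (bas A₁ (fun z => e₁ z A₁)) y C) hK31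
      (fun A₃ _ C => DifferentiableAt.fun_sum fun A₁ _ =>
        (contDiff_cbr_bas (hc₃ A₃) (hc₁ A₁) A₃ A₁ C).differentiable (by simp) x)]
    rw [show (∑ A₃, cbr (fun y C =>
        ∑ A₁, cbr (bas A₃ (fun z => e₃ z A₃)) (bas A₁ (fun z => e₁ z A₁)) y C) e₂ x B)
        = ∑ A₃, ∑ A₁, ∑ A₂, cbr (cbr (bas A₃ (fun z => e₃ z A₃))
            (bas A₁ (fun z => e₁ z A₁))) (bas A₂ (fun z => e₂ z A₂)) x B from
      Finset.sum_congr rfl fun A₃ _ => by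
        rw [cbr_sum_left (u := fun A₁ =>
            cbr (bas A₃ (fun z => e₃ z A₃)) (bas A₁ (fun z => e₁ z A₁))) (fun y A => rfl)
          (fun A₁ _ C => (contDiff_cbr_bas (hc₃ A₃) (hc₁ A₁) A₃ A₁ C).differentiable (by simp) x)]
        exact Finset.sum_congr rfl fun A₁ _ => cbr_sum_right hb₂ (fun k _ C => dbas₂ k C x)]
    exact sum_rot2 _
  -- decomposition of Nform
  have hNdec : ∀ y, Nform e₁ e₂ e₃ y = ∑ A₁, ∑ A₂, ∑ A₃,
      Nform (bas A₁ (fun z => e₁ z A₁)) (bas A₂ (fun z => e₂ z A₂))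
        (bas A₃ (fun z => e₃ z A₃)) y := by
    intro y
    have q1 : pair (cbr e₁ e₂) e₃ y = ∑ A₁, ∑ A₂, ∑ A₃,
        pair (cbr (bas A₁ (fun z => e₁ z A₁)) (bas A₂ (fun z => e₂ z A₂)))
          (bas A₃ (fun z => e₃ z A₃)) y := by
      rw [pair_sum_left hK12]
      refine Finset.sum_congr rfl fun A₁ _ => ?_
      rw [pair_sum_left (u := fun A₂ =>
          cbr (bas A₁ (fun z => e₁ z A₁)) (bas A₂ (fun z => e₂ z A₂))) (fun z A => rfl)]
      exact Finset.sum_congr rfl fun A₂ _ => pair_sum_right hb₃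
    have q2 : pair (cbr e₂ e₃) e₁ y = ∑ A₁, ∑ A₂, ∑ A₃,
        pair (cbr (bas A₂ (fun z => e₂ z A₂)) (bas A₃ (fun z => e₃ z A₃)))
          (bas A₁ (fun z => e₁ z A₁)) y := by
      rw [pair_sum_left hK23]
      rw [show (∑ A₂, pair (fun z A =>
          ∑ A₃, cbr (bas A₂ (fun w => e₂ w A₂)) (bas A₃ (fun w => e₃ w A₃)) z A) e₁ y)
          = ∑ A₂, ∑ A₃, ∑ A₁, pair (cbr (bas A₂ (fun z => e₂ z A₂))
              (bas A₃ (fun z => e₃ z A₃))) (bas A₁ (fun z => e₁ z A₁)) y from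
        Finset.sum_congr rfl fun A₂ _ => by
          rw [pair_sum_left (u := fun A₃ =>
              cbr (bas A₂ (fun z => e₂ z A₂)) (bas A₃ (fun z => e₃ z A₃))) (fun z A => rfl)]
          exact Finset.sum_congr rfl fun A₃ _ => pair_sum_right hb₁]
      exact sum_rot _
    have q3 : pair (cbr e₃ e₁) e₂ y = ∑ A₁, ∑ A₂, ∑ A₃,
        pair (cbr (bas A₃ (fun z => e₃ z A₃)) (bas A₁ (fun z => e₁ z A₁)))
          (bas A₂ (fun z => e₂ z A₂)) y := by
      rw [pair_sum_left hK31]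
      rw [show (∑ A₃, pair (fun z A =>
          ∑ A₁, cbr (bas A₃ (fun w => e₃ w A₃)) (bas A₁ (fun w => e₁ w A₁)) z A) e₂ y)
          = ∑ A₃, ∑ A₁, ∑ A₂, pair (cbr (bas A₃ (fun z => e₃ z A₃))
              (bas A₁ (fun z => e₁ z A₁))) (bas A₂ (fun z => e₂ z A₂)) y from
        Finset.sum_congr rfl fun A₃ _ => by
          rw [pair_sum_left (u := fun A₁ =>
              cbr (bas A₃ (fun z => e₃ z A₃)) (bas A₁ (fun z => e₁ z A₁))) (fun z A => rfl)]
          exact Finset.sum_congr rfl fun A₁ _ => pair_sum_right hb₂]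
      exact sum_rot2 _
    show (1/3) * (pair (cbr e₁ e₂) e₃ y + pair (cbr e₂ e₃) e₁ y
        + pair (cbr e₃ e₁) e₂ y) = _
    rw [q1, q2, q3, ← Finset.sum_add_distrib, ← Finset.sum_add_distrib, Finset.mul_sum]
    refine Finset.sum_congr rfl fun A₁ _ => ?_
    rw [← Finset.sum_add_distrib, ← Finset.sum_add_distrib, Finset.mul_sum]
    refine Finset.sum_congr rfl fun A₂ _ => ?_
    rw [← Finset.sum_add_distrib, ← Finset.sum_add_distrib, Finset.mul_sum]
    exact Finset.sum_congr rfl fun A₃ _ => rfl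
  -- decomposition of Dsec Nform
  have hDdec : Dsec (Nform e₁ e₂ e₃) x B = ∑ A₁, ∑ A₂, ∑ A₃,
      Dsec (Nform (bas A₁ (fun z => e₁ z A₁)) (bas A₂ (fun z => e₂ z A₂))
        (bas A₃ (fun z => e₃ z A₃))) x B := by
    show (1/2) * pd (Nform e₁ e₂ e₃) (σd d B) x = _
    rw [pd_congr hNdec (σd d B) x,
      pd_sum (fun A₁ _ => DifferentiableAt.fun_sum fun A₂ _ => DifferentiableAt.fun_sum fun A₃ _ =>
        (contDiff_Nform_bas (hc₁ A₁) (hc₂ A₂) (hc₃ A₃) A₁ A₂ A₃).differentiable (by simp) x),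
      Finset.mul_sum]
    refine Finset.sum_congr rfl fun A₁ _ => ?_
    rw [pd_sum (fun A₂ _ => DifferentiableAt.fun_sum fun A₃ _ =>
        (contDiff_Nform_bas (hc₁ A₁) (hc₂ A₂) (hc₃ A₃) A₁ A₂ A₃).differentiable (by simp) x),
      Finset.mul_sum]
    refine Finset.sum_congr rfl fun A₂ _ => ?_
    rw [pd_sum (fun A₃ _ =>
        (contDiff_Nform_bas (hc₁ A₁) (hc₂ A₂) (hc₃ A₃) A₁ A₂ A₃).differentiable (by simp) x),
      Finset.mul_sum]
    rfl
  -- final assembly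
  rw [show Jac e₁ e₂ e₃ x B = cbr (cbr e₁ e₂) e₃ x B + cbr (cbr e₂ e₃) e₁ x B
      + cbr (cbr e₃ e₁) e₂ x B from rfl, hT1, hT2, hT3, hDdec,
    ← Finset.sum_add_distrib, ← Finset.sum_add_distrib]
  refine Finset.sum_congr rfl fun A₁ _ => ?_
  rw [← Finset.sum_add_distrib, ← Finset.sum_add_distrib]
  refine Finset.sum_congr rfl fun A₂ _ => ?_
  rw [← Finset.sum_add_distrib, ← Finset.sum_add_distrib]
  refine Finset.sum_congr rfl fun A₃ _ => ?_
  exact core (hc₁ A₁) (hc₂ A₂) (hc₃ A₃) (tc₁ A₁) (tc₂ A₂) (tc₃ A₃) A₁ A₂ A₃ B x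
/-- For tilde-independent sections the Jacobiator of the C-bracket is exact. -/
theorem jacobiator_exact_of_tilde_independent {d : ℕ} (hd : 1 ≤ d) (e₁ e₂ e₃ : Sec d)
    (he₁ : ContDiff ℝ (⊤ : ℕ∞) e₁) (he₂ : ContDiff ℝ (⊤ : ℕ∞) e₂) (he₃ : ContDiff ℝ (⊤ : ℕ∞) e₃)
    (ht₁ : ∀ p q : Fin (2*d) → ℝ, xpart p = xpart q → e₁ p = e₁ q)
    (ht₂ : ∀ p q : Fin (2*d) → ℝ, xpart p = xpart q → e₂ p = e₂ q)
    (ht₃ : ∀ p q : Fin (2*d) → ℝ, xpart p = xpart q → e₃ p = e₃ q) :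
    ∀ (x : Fin (2*d) → ℝ) (B : Fin (2*d)),
      Jac e₁ e₂ e₃ x B = Dsec (Nform e₁ e₂ e₃) x B := by
  exact jacobiator_exact_of_tilde_independent' hd e₁ e₂ e₃ he₁ he₂ he₃ ht₁ ht₂ ht₃

end
end
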